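/- arXiv:2109.01515 — 3 statements merged into one kernel-verified Lean document; each statement's English description precedes it below -/
import Mathlib

section
/- For all real r > 0 and x > 0, one has x·ψ'(x+r) − ψ(x+r) + ψ(r) < 0, where ψ denotes the digamma function and ψ' its derivative (the trigamma function). -/
/-!
`log Γ` is convex and satisfies `log Γ (s + 1) = log Γ s + log s`, so its derivative `ψ` is squeezed
between secant slopes: `log (s - 1) ≤ ψ s ≤ log s`. Hence `ψ (n + t) - ψ (n + r) → 0`, and telescoping
`ψ (s + 1) = ψ s + 1/s` gives `ψ t - ψ r = ∑ₖ (1/(r + k) - 1/(t + k))`; differentiating termwise,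
`ψ' p = ∑ₖ 1/(p + k)²`. For `p = x + r` the claim is then the termwise inequality
`x/(p + k)² < x/((r + k)(p + k)) = 1/(r + k) - 1/(p + k)`.
-/

open Real Filter Topology Set

/-- The digamma function `ψ(x) = Γ'(x)/Γ(x)`. -/
noncomputable def digamma (x : ℝ) : ℝ := deriv Real.Gamma x / Real.Gamma x

lemma differentiableAt_Gamma_of_pos {s : ℝ} (hs : 0 < s) : DifferentiableAt ℝ Gamma s :=
  differentiableAt_Gamma fun m => by linarith [(Nat.cast_nonneg m : (0 : ℝ) ≤ m)]

lemma hasDerivAt_log_Gamma {s : ℝ} (hs : 0 < s) : HasDerivAt (log ∘ Gamma) (digamma s) s :=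
  (differentiableAt_Gamma_of_pos hs).hasDerivAt.log (Gamma_pos_of_pos hs).ne'

lemma log_Gamma_add_one {s : ℝ} (hs : 0 < s) : log (Gamma (s + 1)) = log (Gamma s) + log s := by
  rw [Gamma_add_one hs.ne', log_mul hs.ne' (Gamma_pos_of_pos hs).ne', add_comm]

lemma digamma_add_one {s : ℝ} (hs : 0 < s) : digamma (s + 1) = digamma s + s⁻¹ := by
  have hshift : HasDerivAt (fun y => log (Gamma (y + 1))) (digamma (s + 1)) s :=
    (hasDerivAt_log_Gamma (by linarith)).comp_add_const s 1
  have hsum : HasDerivAt (fun y => log (Gamma y) + log y) (digamma s + s⁻¹) s :=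
    (hasDerivAt_log_Gamma hs).add (hasDerivAt_log hs.ne')
  refine hshift.unique (hsum.congr_of_eventuallyEq ?_)
  filter_upwards [eventually_gt_nhds hs] with y hy using log_Gamma_add_one hy

lemma slope_log_Gamma {s : ℝ} (hs : 0 < s) : slope (log ∘ Gamma) s (s + 1) = log s := by
  simp [slope_def_field, log_Gamma_add_one hs]

lemma digamma_le_log {s : ℝ} (hs : 0 < s) : digamma s ≤ log s :=
  slope_log_Gamma hs ▸ convexOn_log_Gamma.le_slope_of_hasDerivAt hs (by simp; linarith)
    (by linarith) (hasDerivAt_log_Gamma hs)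

lemma log_le_digamma_add_one {s : ℝ} (hs : 0 < s) : log s ≤ digamma (s + 1) :=
  slope_log_Gamma hs ▸ convexOn_log_Gamma.slope_le_of_hasDerivAt hs (by simp; linarith)
    (by linarith) (hasDerivAt_log_Gamma (by linarith))

lemma tendsto_digamma_add_sub_log (a : ℝ) :
    Tendsto (fun s => digamma (s + a) - log s) atTop (𝓝 0) := by
  refine tendsto_of_tendsto_of_tendsto_of_le_of_le' (tendsto_log_comp_add_sub_log (a - 1))
    (tendsto_log_comp_add_sub_log a) ?_ ?_
  · filter_upwards [eventually_gt_atTop (1 - a)] with s hs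
    have := log_le_digamma_add_one (s := s + (a - 1)) (by linarith)
    rw [add_assoc, sub_add_cancel] at this
    linarith
  · filter_upwards [eventually_gt_atTop (-a)] with s hs
    linarith [digamma_le_log (s := s + a) (by linarith)]

lemma digamma_add_nat {t : ℝ} (ht : 0 < t) (n : ℕ) :
    digamma (t + n) = digamma t + ∑ k ∈ Finset.range n, (t + k)⁻¹ := by
  induction n with
  | zero => simp
  | succ n ih =>
    rw [Nat.cast_succ, ← add_assoc, digamma_add_one (by positivity), ih, Finset.sum_range_succ,
      add_assoc]

lemma hasSum_digamma_sub {r t : ℝ} (hr : 0 < r) (hrt : r ≤ t) :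
    HasSum (fun k : ℕ => (r + k)⁻¹ - (t + k)⁻¹) (digamma t - digamma r) := by
  have hnonneg (k : ℕ) : 0 ≤ (r + k)⁻¹ - (t + k)⁻¹ :=
    sub_nonneg.2 (inv_anti₀ (by positivity) (by linarith))
  have hpartial (n : ℕ) : ∑ k ∈ Finset.range n, ((r + k)⁻¹ - (t + k)⁻¹) =
      digamma t - digamma r - (digamma (n + t) - digamma (n + r)) := by
    rw [Finset.sum_sub_distrib, add_comm (n : ℝ), add_comm (n : ℝ), digamma_add_nat hr,
      digamma_add_nat (hr.trans_le hrt)]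
    ring
  have htail : Tendsto (fun n : ℕ => digamma (n + t) - digamma (n + r)) atTop (𝓝 0) := by
    simpa [Function.comp_def] using ((tendsto_digamma_add_sub_log t).sub
      (tendsto_digamma_add_sub_log r)).comp tendsto_natCast_atTop_atTop
  rw [hasSum_iff_tendsto_nat_of_nonneg hnonneg, funext hpartial]
  simpa using tendsto_const_nhds.sub htail

lemma summable_inv_add_sq (a : ℝ) : Summable fun k : ℕ => ((a + k) ^ 2)⁻¹ :=
  ((summable_one_div_nat_add_rpow a 2).2 one_lt_two).congr fun k => by
    rw [one_div, rpow_two, sq_abs, add_comm]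

lemma hasDerivAt_digamma {p : ℝ} (hp : 0 < p) :
    HasDerivAt digamma (∑' k : ℕ, ((p + k) ^ 2)⁻¹) p := by
  obtain ⟨r, hr, hrp⟩ : ∃ r, 0 < r ∧ r < p := ⟨p / 2, by positivity, by linarith⟩
  have hterm (k : ℕ) (y : ℝ) (hy : y ∈ Ioi r) :
      HasDerivAt (fun z : ℝ => (r + k)⁻¹ - (z + k)⁻¹) ((y + k) ^ 2)⁻¹ y := by
    have hyk : y + k ≠ 0 := by have : 0 < y := hr.trans hy; positivity
    simpa [div_eq_mul_inv] using
      (((hasDerivAt_id' y).add_const (k : ℝ)).fun_inv hyk).const_sub (r + k)⁻¹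
  have hbound (k : ℕ) (y : ℝ) (hy : y ∈ Ioi r) : ‖((y + k) ^ 2)⁻¹‖ ≤ ((r + k) ^ 2)⁻¹ := by
    have : r < y := hy
    rw [Real.norm_of_nonneg (by positivity)]
    gcongr
  have hp' : p ∈ Ioi r := hrp
  have hseries := hasDerivAt_tsum_of_isPreconnected (summable_inv_add_sq r) isOpen_Ioi
    isPreconnected_Ioi hterm hbound hp' (hasSum_digamma_sub hr hrp.le).summable hp'
  refine (hseries.const_add (digamma r)).congr_of_eventuallyEq ?_
  filter_upwards [Ioi_mem_nhds hp'] with z hz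
  rw [(hasSum_digamma_sub hr hz.out.le).tsum_eq, add_sub_cancel]

lemma mul_inv_sq_lt_inv_sub_inv {a x : ℝ} (ha : 0 < a) (hx : 0 < x) :
    x * ((x + a) ^ 2)⁻¹ < a⁻¹ - (x + a)⁻¹ := by
  rw [inv_sub_inv ha.ne' (by positivity), add_sub_cancel_right, ← div_eq_mul_inv, sq]
  gcongr
  linarith

theorem mul_trigamma_sub_digamma_neg (r x : ℝ) (hr : 0 < r) (hx : 0 < x) :
    x * deriv digamma (x + r) - digamma (x + r) + digamma r < 0 := by
  have hp : 0 < x + r := by positivity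
  have htrigamma := (summable_inv_add_sq (x + r)).hasSum.mul_left x
  have hterm (k : ℕ) : x * ((x + r + k) ^ 2)⁻¹ < (r + k)⁻¹ - (x + r + k)⁻¹ := by
    simpa only [add_assoc] using mul_inv_sq_lt_inv_sub_inv (by positivity : 0 < r + k) hx
  have hlt := hasSum_lt (fun k => (hterm k).le) (hterm 0) htrigamma
    (hasSum_digamma_sub hr (by linarith))
  rw [(hasDerivAt_digamma hp).deriv]
  linarith
end

section
/- Let r ∈ [0, ∞). The sequences a_n(r) and b_n(r) both converge as n → ∞, and they converge to the same limit γ̄_{h^{(r)}} (which lies in [0, 1/Γ(r+1)]). -/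
open MeasureTheory Filter Topology

/-- The rising factorial `x^{r̄} = Γ(x+r)/Γ(x)`. -/
noncomputable def rise (x r : ℝ) : ℝ := Real.Gamma (x + r) / Real.Gamma x

/-- The analytic extension of the hyperharmonic numbers:
`h_x^{(r)} = (x^{r̄}/(x Γ(r)))(ψ(x+r) − ψ(r))` for `r > 0`, and `h_x^{(0)} = 1/x`. -/
noncomputable def hyp (r x : ℝ) : ℝ :=
  if r = 0 then 1 / x
  else rise x r / (x * Real.Gamma r) * (digamma (x + r) - digamma r)

/-- `y_n(r) = ∑_{k=1}^n h_k^{(r)}/k^r − ∫_1^n h_x^{(r)}/x^r dx`. -/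
noncomputable def yseq (r : ℝ) (n : ℕ) : ℝ :=
  ∑ k ∈ Finset.Icc 1 n, hyp r k / (k : ℝ) ^ r - ∫ x in (1:ℝ)..(n:ℝ), hyp r x / x ^ r

/-- `z_n(r) = ∑_{k=1}^{n-1} h_k^{(r)}/k^r − ∫_1^n h_x^{(r)}/x^r dx`. -/
noncomputable def zseq (r : ℝ) (n : ℕ) : ℝ :=
  ∑ k ∈ Finset.Icc 1 (n - 1), hyp r k / (k : ℝ) ^ r - ∫ x in (1:ℝ)..(n:ℝ), hyp r x / x ^ r

/-- `b_n(r) = ∑_{k=1}^n h_k^{(r)}/k^{r̄} − ∫_1^n h_x^{(r)}/x^{r̄} dx`. -/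
noncomputable def bseq (r : ℝ) (n : ℕ) : ℝ :=
  ∑ k ∈ Finset.Icc 1 n, hyp r k / rise k r - ∫ x in (1:ℝ)..(n:ℝ), hyp r x / rise x r

/-- `a_n(r) = ∑_{k=1}^{n-1} h_k^{(r)}/k^{r̄} − ∫_1^n h_x^{(r)}/x^{r̄} dx`. -/
noncomputable def aseq (r : ℝ) (n : ℕ) : ℝ :=
  ∑ k ∈ Finset.Icc 1 (n - 1), hyp r k / rise k r - ∫ x in (1:ℝ)..(n:ℝ), hyp r x / rise x r

/-!
Write `f(x) = h_x^{(r)} / x^{r̄}`. For `r = 0` this is `1/x`. For `r > 0` it equals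
`(ψ(r+x) − ψ(r)) / (x Γ(r))`, and telescoping `ψ(y+1) = ψ(y) + 1/y` gives
`f(x) = Γ(r)⁻¹ ∑ₖ 1/((r+k)(r+k+x))`; the tail `ψ(r+N+x) − ψ(r+N)` vanishes because `ψ` is
monotone, `Γ` being log-convex. So `f` is nonnegative and decreasing on `[1, ∞)`, with
`f(1) = 1/Γ(r+1)` and `f(n) = Γ(r)⁻¹ · n⁻¹ ∑_{k<n} 1/(r+k) → 0` by Cesàro.

For any such `f`, `b_n = ∑_{k ≤ n} f(k) − ∫_1^n f` decreases, since `f(n+1) ≤ ∫_n^{n+1} f`, and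
stays above `f(n) ≥ 0`, so it converges to a limit in `[0, f(1)]`; and `a_n = b_n − f(n)` has the
same limit.
-/

open Set

section EulerConstant

noncomputable def eulerDiff (f : ℝ → ℝ) (n : ℕ) : ℝ :=
  ∑ k ∈ Finset.Icc 1 n, f k - ∫ x in (1 : ℝ)..n, f x

lemma eulerDiff_one (f : ℝ → ℝ) : eulerDiff f 1 = f 1 := by
  simp [eulerDiff]

variable {f : ℝ → ℝ}

lemma AntitoneOn.le_eulerDiff (hf : AntitoneOn f (Ici 1)) {n : ℕ} (hn : 1 ≤ n) :
    f n ≤ eulerDiff f n := by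
  have hint : ∫ x in (1 : ℝ)..n, f x ≤ ∑ k ∈ Finset.Ico 1 n, f k := by
    exact_mod_cast AntitoneOn.integral_le_sum_Ico hn
      (hf.mono (by simpa using Icc_subset_Ici_self))
  rw [eulerDiff, ← Finset.Ico_insert_right hn, Finset.sum_insert (by simp)]
  linarith

lemma AntitoneOn.eulerDiff_succ_le (hf : AntitoneOn f (Ici 1)) {n : ℕ} (hn : 1 ≤ n) :
    eulerDiff f (n + 1) ≤ eulerDiff f n := by
  have hn' : (1 : ℝ) ≤ n := by exact_mod_cast hn
  have hint (a b : ℝ) (ha : 1 ≤ a) (hb : 1 ≤ b) : IntervalIntegrable f volume a b :=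
    (hf.mono fun x hx => le_trans (le_min ha hb) hx.1).intervalIntegrable
  have hstep : f (n + 1) ≤ ∫ x in (n : ℝ)..n + 1, f x := by
    simpa using intervalIntegral.integral_mono_on (by linarith) intervalIntegrable_const
      (hint n (n + 1) hn' (by linarith))
      fun x hx => hf (hn'.trans hx.1) (by simp only [mem_Ici]; linarith) hx.2
  rw [eulerDiff, eulerDiff, Finset.sum_Icc_succ_top (by omega), Nat.cast_succ,
    ← intervalIntegral.integral_add_adjacent_intervals (hint 1 n le_rfl hn')
      (hint n (n + 1) hn' (by linarith))]
  linarith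

theorem AntitoneOn.exists_tendsto_eulerDiff (hf : AntitoneOn f (Ici 1))
    (hf₀ : ∀ x, 1 ≤ x → 0 ≤ f x) :
    ∃ γ ∈ Icc 0 (f 1), Tendsto (eulerDiff f) atTop (𝓝 γ) := by
  set u : ℕ → ℝ := fun n => eulerDiff f (n + 1)
  have hu : Antitone u := antitone_nat_of_succ_le fun n => hf.eulerDiff_succ_le (by omega)
  have hu₀ (n : ℕ) : 0 ≤ u n :=
    (hf₀ _ (by exact_mod_cast Nat.le_add_left 1 n)).trans (hf.le_eulerDiff (by omega))
  have hbdd : BddBelow (range u) := ⟨0, by rintro _ ⟨n, rfl⟩; exact hu₀ n⟩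
  refine ⟨⨅ n, u n, ⟨le_ciInf hu₀, ?_⟩,
    (tendsto_add_atTop_iff_nat 1).1 (tendsto_atTop_ciInf hu hbdd)⟩
  simpa [u, eulerDiff_one] using ciInf_le hbdd 0

lemma Filter.Tendsto.eulerDiff_sub {γ : ℝ} (h : Tendsto (eulerDiff f) atTop (𝓝 γ))
    (hf : Tendsto (fun n : ℕ => f n) atTop (𝓝 0)) :
    Tendsto (fun n : ℕ => ∑ k ∈ Finset.Icc 1 (n - 1), f k - ∫ x in (1 : ℝ)..n, f x)
      atTop (𝓝 γ) := by
  refine (sub_zero γ ▸ h.sub hf).congr' ?_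
  filter_upwards [eventually_ge_atTop 1] with n hn
  obtain ⟨m, rfl⟩ := Nat.exists_eq_add_of_le' hn
  rw [eulerDiff, Finset.sum_Icc_succ_top (by omega), Nat.add_sub_cancel]
  ring

end EulerConstant

section Digamma

variable {x r : ℝ}

lemma differentiableAt_Gamma_of_pos_s8 (hx : 0 < x) : DifferentiableAt ℝ Real.Gamma x :=
  Real.differentiableAt_Gamma fun m => by linarith [(Nat.cast_nonneg m : (0 : ℝ) ≤ m)]

lemma digamma_eq_deriv_log_Gamma (hx : 0 < x) :
    digamma x = deriv (fun y => Real.log (Real.Gamma y)) x :=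
  (deriv.log (differentiableAt_Gamma_of_pos_s8 hx) (Real.Gamma_pos_of_pos hx).ne').symm

lemma digamma_add_one_s8 (hx : 0 < x) : digamma (x + 1) = digamma x + 1 / x := by
  have hlog : (fun y => Real.log (Real.Gamma (y + 1))) =ᶠ[𝓝 x]
      fun y => Real.log (Real.Gamma y) + Real.log y := by
    filter_upwards [eventually_gt_nhds hx] with y hy
    rw [Real.Gamma_add_one hy.ne', Real.log_mul hy.ne' (Real.Gamma_pos_of_pos hy).ne', add_comm]
  rw [digamma_eq_deriv_log_Gamma (by linarith), digamma_eq_deriv_log_Gamma hx,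
    ← deriv_comp_add_const, hlog.deriv_eq, deriv_fun_add, Real.deriv_log, one_div]
  · exact (differentiableAt_Gamma_of_pos_s8 hx).log (Real.Gamma_pos_of_pos hx).ne'
  · exact Real.differentiableAt_log hx.ne'

lemma digamma_add_nat_s8 (hx : 0 < x) (N : ℕ) :
    digamma (x + N) = digamma x + ∑ k ∈ Finset.range N, 1 / (x + k) := by
  induction N with
  | zero => simp
  | succ N ih =>
    rw [Nat.cast_succ, ← add_assoc, digamma_add_one_s8 (by positivity), ih, Finset.sum_range_succ,
      add_assoc]

lemma monotoneOn_digamma : MonotoneOn digamma (Ioi 0) := by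
  refine (Real.convexOn_log_Gamma.monotoneOn_deriv fun y hy => ?_).congr fun y hy => ?_
  · exact (differentiableAt_Gamma_of_pos_s8 hy).log (Real.Gamma_pos_of_pos hy).ne'
  · exact (digamma_eq_deriv_log_Gamma hy).symm

lemma tendsto_digamma_add_nat_sub (hr : 0 < r) (hx : 0 ≤ x) :
    Tendsto (fun N : ℕ => digamma (r + N + x) - digamma (r + N)) atTop (𝓝 0) := by
  set m := ⌈x⌉₊
  have hlower (N : ℕ) : 0 ≤ digamma (r + N + x) - digamma (r + N) :=
    sub_nonneg.2 (monotoneOn_digamma (by positivity : (0 : ℝ) < r + N)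
      (by positivity : (0 : ℝ) < r + N + x) (by linarith))
  have hupper (N : ℕ) : digamma (r + N + x) - digamma (r + N) ≤
      ∑ k ∈ Finset.range m, 1 / (r + N + k) := by
    have hle : digamma (r + N + x) ≤ digamma (r + N + m) :=
      monotoneOn_digamma (by positivity : (0 : ℝ) < r + N + x) (by positivity : (0 : ℝ) < r + N + m)
        (by linarith [Nat.le_ceil x])
    rw [digamma_add_nat_s8 (by positivity)] at hle
    linarith
  have hzero : Tendsto (fun N : ℕ => ∑ k ∈ Finset.range m, 1 / (r + N + k)) atTop (𝓝 0) := by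
    rw [← Finset.sum_const_zero (s := Finset.range m)]
    refine tendsto_finsetSum _ fun k _ => ?_
    simp only [one_div]
    exact (tendsto_atTop_add_const_right _ (k : ℝ)
      (tendsto_atTop_add_const_left _ r tendsto_natCast_atTop_atTop)).inv_tendsto_atTop
  exact tendsto_of_tendsto_of_tendsto_of_le_of_le tendsto_const_nhds hzero hlower hupper

lemma hasSum_digamma_sub_div (hr : 0 < r) (hx : 0 < x) :
    HasSum (fun k : ℕ => 1 / ((r + k) * (r + k + x))) ((digamma (r + x) - digamma r) / x) := by
  have hterm (k : ℕ) : 1 / ((r + k) * (r + k + x)) = (1 / (r + k) - 1 / (r + k + x)) / x := by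
    field_simp
    ring
  have hpartial (N : ℕ) : ∑ k ∈ Finset.range N, (1 / (r + k) - 1 / (r + k + x)) =
      (digamma (r + x) - digamma r) - (digamma (r + N + x) - digamma (r + N)) := by
    have h₁ := digamma_add_nat_s8 hr N
    have h₂ := digamma_add_nat_s8 (by positivity : 0 < r + x) N
    simp_rw [add_right_comm r x] at h₂
    rw [Finset.sum_sub_distrib]
    linarith
  simp_rw [hterm]
  refine HasSum.div_const ((hasSum_iff_tendsto_nat_of_nonneg (fun k => ?_) _).2 ?_) x
  · exact sub_nonneg.2 (one_div_le_one_div_of_le (by positivity) (by linarith))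
  · simp_rw [hpartial]
    simpa using (tendsto_digamma_add_nat_sub hr hx.le).const_sub (digamma (r + x) - digamma r)

end Digamma

section Hyperharmonic

variable {r x : ℝ}

lemma hyp_zero_div_rise (hx : 0 < x) : hyp 0 x / rise x 0 = 1 / x := by
  simp [hyp, rise, (Real.Gamma_pos_of_pos hx).ne']

lemma hyp_div_rise_of_pos (hr : 0 < r) (hx : 0 < x) :
    hyp r x / rise x r = (digamma (r + x) - digamma r) / x / Real.Gamma r := by
  have hrise : rise x r ≠ 0 :=
    div_ne_zero (Real.Gamma_pos_of_pos (by positivity)).ne' (Real.Gamma_pos_of_pos hx).ne'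
  rw [hyp, if_neg hr.ne', add_comm x r]
  field_simp

lemma hyp_div_rise_nonneg (hr : 0 ≤ r) (hx : 0 < x) : 0 ≤ hyp r x / rise x r := by
  rcases hr.eq_or_lt with rfl | hr
  · rw [hyp_zero_div_rise hx]
    positivity
  · rw [hyp_div_rise_of_pos hr hx]
    refine div_nonneg ((hasSum_digamma_sub_div hr hx).nonneg fun k => ?_)
      (Real.Gamma_pos_of_pos hr).le
    positivity

lemma antitoneOn_hyp_div_rise (hr : 0 ≤ r) :
    AntitoneOn (fun x => hyp r x / rise x r) (Ici 1) := by
  intro x hx y hy hxy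
  have hx₀ : 0 < x := zero_lt_one.trans_le hx
  have hy₀ : 0 < y := zero_lt_one.trans_le hy
  rcases hr.eq_or_lt with rfl | hr
  · simp only [hyp_zero_div_rise hx₀, hyp_zero_div_rise hy₀]
    exact one_div_le_one_div_of_le hx₀ hxy
  · simp only [hyp_div_rise_of_pos hr hx₀, hyp_div_rise_of_pos hr hy₀]
    refine div_le_div_of_nonneg_right ?_ (Real.Gamma_pos_of_pos hr).le
    refine hasSum_le (fun k => ?_) (hasSum_digamma_sub_div hr hy₀) (hasSum_digamma_sub_div hr hx₀)
    gcongr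

lemma hyp_one_div_rise_one (hr : 0 ≤ r) : hyp r 1 / rise 1 r = 1 / Real.Gamma (r + 1) := by
  rcases hr.eq_or_lt with rfl | hr
  · simp [hyp_zero_div_rise one_pos]
  · rw [hyp_div_rise_of_pos hr one_pos, digamma_add_one_s8 hr, Real.Gamma_add_one hr.ne']
    field_simp
    ring

lemma tendsto_hyp_div_rise (hr : 0 ≤ r) :
    Tendsto (fun n : ℕ => hyp r n / rise n r) atTop (𝓝 0) := by
  rcases hr.eq_or_lt with rfl | hr
  · refine (tendsto_one_div_atTop_nhds_zero_nat).congr' ?_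
    filter_upwards [eventually_gt_atTop 0] with n hn
    rw [hyp_zero_div_rise (by exact_mod_cast hn)]
  · have hinv : Tendsto (fun k : ℕ => (r + k)⁻¹) atTop (𝓝 0) :=
      (tendsto_atTop_add_const_left _ r tendsto_natCast_atTop_atTop).inv_tendsto_atTop
    refine (zero_div (Real.Gamma r) ▸ hinv.cesaro.div_const (Real.Gamma r)).congr' ?_
    filter_upwards [eventually_gt_atTop 0] with n hn
    rw [hyp_div_rise_of_pos hr (by exact_mod_cast hn), digamma_add_nat_s8 hr, add_sub_cancel_left,
      div_eq_inv_mul _ (n : ℝ)]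
    simp only [one_div]

end Hyperharmonic

theorem ab_tendsto (r : ℝ) (hr : 0 ≤ r) :
    ∃ γbar : ℝ, γbar ∈ Set.Icc (0 : ℝ) (1 / Real.Gamma (r + 1)) ∧
      Tendsto (aseq r) atTop (𝓝 γbar) ∧ Tendsto (bseq r) atTop (𝓝 γbar) := by
  obtain ⟨γ, hγ, hb⟩ := (antitoneOn_hyp_div_rise hr).exists_tendsto_eulerDiff
    fun x hx => hyp_div_rise_nonneg hr (zero_lt_one.trans_le hx)
  rw [hyp_one_div_rise_one hr] at hγ
  exact ⟨γ, hγ, hb.eulerDiff_sub (tendsto_hyp_div_rise hr), hb⟩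
end

section
/- Let r ≥ 1 be an integer and n ≥ 1 a natural number. Then Γ(r)·∑_{k=1}^n h_k^{(r)}/k^r = (H_n² + H_n^{(2)})/2 − (ψ(r)+γ)·H_n + ∑_{j=0}^{r−1} [r j]·(∑_{k=1}^n H_{k+r−1}/k^{r+1−j} − (ψ(r)+γ)·H_n^{(r+1−j)}) + ∑_{j=1}^{r−1} H_j/j − H_{r−1}·(H_{n+r−1} − H_n) + ∑_{j=1}^{r−1} H_{j−1}/(j+n). -/
open MeasureTheory Filter Topology

/-- The `m`-th harmonic number `H_m = ∑_{k=1}^m 1/k` (with `H 0 = 0`). -/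
noncomputable def H (m : ℕ) : ℝ := ∑ k ∈ Finset.Icc 1 m, (1 : ℝ) / k

/-- The generalized harmonic number `H_m^{(s)} = ∑_{k=1}^m 1/k^s`. -/
noncomputable def Hgen (m s : ℕ) : ℝ := ∑ k ∈ Finset.Icc 1 m, (1 : ℝ) / (k : ℝ) ^ s

/-- The unsigned Stirling numbers of the first kind, via the recurrence
`[n+1, k+1] = n·[n, k+1] + [n, k]`, `[0,0] = 1`. -/
def stirling1 : ℕ → ℕ → ℕ
  | 0, 0 => 1
  | 0, _ + 1 => 0
  | _ + 1, 0 => 0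
  | n + 1, k + 1 => n * stirling1 n (k + 1) + stirling1 n k

/-!
For a positive integer `m`, `ψ(m) = H_{m-1} - γ`, so
`Γ(r) h_k^{(r)} / k^r = k^{r̄} (H_{k+r-1} - H_{r-1}) / k^{r+1}`. Expanding `k^{r̄}` in Stirling
numbers of the first kind (the coefficients of the Pochhammer polynomial) and exchanging the sums
gives all terms `j < r` directly. The remaining term `∑ H_{k+r-1}/k` is computed by induction on the
shift `r - 1`: raising the shift by `j` adds the partial-fraction sum
`∑ 1/(k(k+j)) = (H_j + H_n - H_{n+j})/j`, and the unshifted sum is `∑ H_k/k = (H_n² + H_n^{(2)})/2`.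
-/

open Finset Polynomial

lemma stirling1_eq_stirlingFirst : stirling1 = Nat.stirlingFirst := by
  ext n k
  induction n generalizing k with
  | zero => cases k <;> rfl
  | succ n ih =>
    cases k with
    | zero => rfl
    | succ k => simp only [stirling1, Nat.stirlingFirst_succ_succ, ih]

lemma ascPochhammer_coeff {S : Type*} [Semiring S] (n j : ℕ) :
    (ascPochhammer S n).coeff j = Nat.stirlingFirst n j := by
  induction n generalizing j with
  | zero => cases j <;> simp [coeff_one]
  | succ n ih =>
    rw [ascPochhammer_succ_right, mul_add, coeff_add, ← C_eq_natCast, coeff_mul_C]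
    cases j with
    | zero => cases n <;> simp [ih]
    | succ j =>
      rw [coeff_mul_X, ih, ih, Nat.stirlingFirst_succ_succ]
      push_cast
      rw [add_comm, Nat.cast_comm]

lemma ascPochhammer_eval_eq_sum {S : Type*} [CommSemiring S] (n : ℕ) (x : S) :
    (ascPochhammer S n).eval x = ∑ j ∈ range (n + 1), (Nat.stirlingFirst n j : S) * x ^ j := by
  have hdeg : (ascPochhammer S n).natDegree < n + 1 :=
    Nat.lt_succ_of_le <| natDegree_le_iff_coeff_eq_zero.mpr fun j hj => by
      rw [ascPochhammer_coeff, Nat.stirlingFirst_eq_zero_of_lt hj, Nat.cast_zero]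
  simp only [eval_eq_sum_range' hdeg, ascPochhammer_coeff]

lemma rise_natCast_eq_ascPochhammer_eval {x : ℝ} (hx : 0 < x) (n : ℕ) :
    rise x n = (ascPochhammer ℝ n).eval x := by
  induction n with
  | zero => simp [rise, (Real.Gamma_pos_of_pos hx).ne']
  | succ n ih =>
    rw [ascPochhammer_succ_eval, ← ih, rise, rise, Nat.cast_succ, ← add_assoc,
      Real.Gamma_add_one (by positivity)]
    ring

lemma H_succ (m : ℕ) : H (m + 1) = H m + 1 / (m + 1) := by
  rw [H, sum_Icc_succ_top (by omega), ← H]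
  push_cast; ring

lemma H_eq_harmonic (m : ℕ) : H m = harmonic m := by
  induction m with
  | zero => simp [H]
  | succ m ih => rw [H_succ, harmonic_succ, ih]; push_cast; ring

lemma Hgen_succ (m s : ℕ) : Hgen (m + 1) s = Hgen m s + 1 / ((m : ℝ) + 1) ^ s := by
  rw [Hgen, sum_Icc_succ_top (by omega), ← Hgen]
  push_cast; ring

lemma Hgen_one (n : ℕ) : Hgen n 1 = H n := by simp [Hgen, H]

lemma digamma_natCast {m : ℕ} (hm : m ≠ 0) :
    digamma m = H (m - 1) - Real.eulerMascheroniConstant := by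
  obtain ⟨m, rfl⟩ := Nat.exists_eq_add_one_of_ne_zero hm
  rw [digamma, Nat.cast_succ, Real.deriv_Gamma_nat, Real.Gamma_nat_eq_factorial,
    Nat.add_sub_cancel, H_eq_harmonic]
  field_simp
  ring

lemma sum_H_div_self (n : ℕ) : ∑ k ∈ Icc 1 n, H k / k = (H n ^ 2 + Hgen n 2) / 2 := by
  induction n with
  | zero => simp [H, Hgen]
  | succ n ih =>
    rw [sum_Icc_succ_top (by omega), ih, H_succ, Hgen_succ]
    push_cast
    field_simp
    ring

lemma sum_one_div_mul_add {j : ℕ} (hj : j ≠ 0) (n : ℕ) :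
    ∑ k ∈ Icc 1 n, 1 / ((k : ℝ) * (k + j)) = (H j + H n - H (n + j)) / j := by
  induction n with
  | zero => simp [H]
  | succ n ih =>
    rw [sum_Icc_succ_top (by omega), ih, H_succ, Nat.add_right_comm, H_succ (n + j)]
    push_cast
    field_simp
    ring

lemma sum_H_add_div_self (m n : ℕ) :
    ∑ k ∈ Icc 1 n, H (k + m) / k =
      (H n ^ 2 + Hgen n 2) / 2 + ∑ j ∈ Icc 1 m, H j / j - H m * (H (n + m) - H n) +
        ∑ j ∈ Icc 1 m, H (j - 1) / ((j : ℝ) + n) := by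
  induction m with
  | zero => simpa using sum_H_div_self n
  | succ m ih =>
    have hstep : ∀ k ∈ Icc 1 n, H (k + (m + 1)) / k =
        H (k + m) / k + 1 / ((k : ℝ) * (k + ((m + 1 : ℕ) : ℝ))) := by
      intro k hk
      have : (k : ℝ) ≠ 0 := Nat.cast_ne_zero.mpr (by simp only [Finset.mem_Icc] at hk; omega)
      rw [← add_assoc, H_succ]
      push_cast
      field_simp
      ring
    rw [sum_congr rfl hstep, sum_add_distrib, ih, sum_one_div_mul_add (j := m + 1) (by omega),
      sum_Icc_succ_top (by omega), sum_Icc_succ_top (by omega), H_succ m, ← Nat.add_assoc n m 1,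
      H_succ (n + m), Nat.add_sub_cancel]
    push_cast
    field_simp
    ring

lemma Gamma_mul_hyp_natCast_div_pow {r k : ℕ} (hr : r ≠ 0) (hk : k ≠ 0) :
    Real.Gamma r * (hyp r k / (k : ℝ) ^ r) =
      ∑ j ∈ range (r + 1), (Nat.stirlingFirst r j : ℝ) *
        ((H (k + r - 1) - H (r - 1)) / (k : ℝ) ^ (r + 1 - j)) := by
  have hk' : (0 : ℝ) < k := by positivity
  have hΓ : Real.Gamma r ≠ 0 := (Real.Gamma_pos_of_pos (by positivity)).ne'
  have hψ : digamma (k + r) - digamma r = H (k + r - 1) - H (r - 1) := by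
    rw [← Nat.cast_add, digamma_natCast (by omega), digamma_natCast hr]
    ring
  have hfactor : Real.Gamma r * (hyp r k / (k : ℝ) ^ r) =
      (ascPochhammer ℝ r).eval (k : ℝ) * ((H (k + r - 1) - H (r - 1)) / (k : ℝ) ^ (r + 1)) := by
    rw [hyp, if_neg (by exact_mod_cast hr), hψ, rise_natCast_eq_ascPochhammer_eval hk', pow_succ]
    field_simp
  rw [hfactor, ascPochhammer_eval_eq_sum, sum_mul]
  refine sum_congr rfl fun j hj => ?_
  have hpow : (k : ℝ) ^ (r + 1) = (k : ℝ) ^ j * (k : ℝ) ^ (r + 1 - j) := by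
    rw [← pow_add]
    congr 1
    have := mem_range.mp hj
    omega
  rw [hpow]
  field_simp

theorem gamma_mul_sum_hyp_general (r : ℕ) (hr : 1 ≤ r) (n : ℕ) :
    Real.Gamma r * ∑ k ∈ Finset.Icc 1 n, hyp r k / (k : ℝ) ^ (r : ℕ) =
      ((H n) ^ 2 + Hgen n 2) / 2 - (digamma r + Real.eulerMascheroniConstant) * H n +
      ∑ j ∈ Finset.range r, (stirling1 r j : ℝ) *
        (∑ k ∈ Finset.Icc 1 n, H (k + r - 1) / (k : ℝ) ^ (r + 1 - j) -
          (digamma r + Real.eulerMascheroniConstant) * Hgen n (r + 1 - j)) +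
      ∑ j ∈ Finset.Icc 1 (r - 1), H j / (j : ℝ) -
      H (r - 1) * (H (n + r - 1) - H n) +
      ∑ j ∈ Finset.Icc 1 (r - 1), H (j - 1) / ((j : ℝ) + n) := by
  have hψ : digamma r + Real.eulerMascheroniConstant = H (r - 1) := by
    rw [digamma_natCast (by omega)]
    ring
  have hsplit : ∀ j, ∑ k ∈ Icc 1 n, (Nat.stirlingFirst r j : ℝ) *
      ((H (k + r - 1) - H (r - 1)) / (k : ℝ) ^ (r + 1 - j)) =
      Nat.stirlingFirst r j * (∑ k ∈ Icc 1 n, H (k + r - 1) / (k : ℝ) ^ (r + 1 - j) -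
        H (r - 1) * Hgen n (r + 1 - j)) := by
    intro j
    rw [Hgen, mul_sum, ← sum_sub_distrib, mul_sum]
    exact sum_congr rfl fun k _ => by ring
  have hlast : ∑ k ∈ Icc 1 n, H (k + r - 1) / (k : ℝ) ^ (r + 1 - r) =
      ∑ k ∈ Icc 1 n, H (k + (r - 1)) / k := by
    simp only [Nat.add_sub_cancel_left, pow_one, Nat.add_sub_assoc hr]
  rw [hψ, stirling1_eq_stirlingFirst, mul_sum,
    sum_congr rfl fun k hk => Gamma_mul_hyp_natCast_div_pow (by omega)
      (by simp only [Finset.mem_Icc] at hk; omega),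
    sum_comm, sum_range_succ, sum_congr rfl fun j _ => hsplit j, hsplit,
    Nat.stirlingFirst_self, hlast, Nat.add_sub_cancel_left, Hgen_one, sum_H_add_div_self,
    ← Nat.add_sub_assoc hr]
  push_cast
  ring

theorem gamma_mul_sum_hyp (r : ℕ) (hr : 1 ≤ r) (n : ℕ) (hn : 1 ≤ n) :
    Real.Gamma r * ∑ k ∈ Finset.Icc 1 n, hyp r k / (k : ℝ) ^ (r : ℕ) =
      ((H n) ^ 2 + Hgen n 2) / 2 - (digamma r + Real.eulerMascheroniConstant) * H n +
      ∑ j ∈ Finset.range r, (stirling1 r j : ℝ) *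
        (∑ k ∈ Finset.Icc 1 n, H (k + r - 1) / (k : ℝ) ^ (r + 1 - j) -
          (digamma r + Real.eulerMascheroniConstant) * Hgen n (r + 1 - j)) +
      ∑ j ∈ Finset.Icc 1 (r - 1), H j / (j : ℝ) -
      H (r - 1) * (H (n + r - 1) - H n) +
      ∑ j ∈ Finset.Icc 1 (r - 1), H (j - 1) / ((j : ℝ) + n) :=
  gamma_mul_sum_hyp_general r hr n
end
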